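/- arXiv:math/0611756 — 4 statements merged into one kernel-verified Lean document; each statement's English description precedes it below -/
import Mathlib

section
/- Let G be an infinite group in which every proper nontrivial subgroup has order a fixed prime p, and let H be a proper nontrivial subgroup of G. Then the action of G by right multiplication on the coset space G/H is faithful and primitive, and every nontrivial orbit of the point stabiliser of the coset H on G/H has cardinality exactly p. -/
/-- A permutation action is primitive: it is transitive and the only
`G`-invariant equivalence relations are the trivial and universal ones. -/
def IsPrimitiveAction (G : Type*) (Ω : Type*) [Group G] [MulAction G Ω] : Prop :=
  (∀ a b : Ω, ∃ g : G, g • a = b) ∧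
  ∀ r : Setoid Ω, (∀ (g : G) (x y : Ω), r.r x y → r.r (g • x) (g • y)) → r = ⊥ ∨ r = ⊤

/-!
Every proper nontrivial subgroup of `G` is maximal, since a chain `K < L` of such subgroups
would consist of two groups of the same finite order `p`. None of them is normal: for `N`
normal the quotient `G ⧸ N` would have no proper nontrivial subgroup, so it would be finite,
and `G` with it. Hence `H` is a maximal, core-free, self-normalising subgroup: the action on
`G ⧸ H` is faithful and primitive, and a coset `gH ≠ H` fixed by `H` would put `g` in the
normaliser of `H`, so the `H`-orbits off `H` have size dividing `p` but not `1`.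
-/

open MulAction

namespace MulAction

variable {G X : Type*} [Group G] [MulAction G X]

theorem isBlock_setOf_rel {r : Setoid X} (hr : ∀ (g : G) (x y : X), r x y → r (g • x) (g • y))
    (a : X) : IsBlock G {y | r a y} := by
  refine isBlock_iff_smul_eq_of_mem.2 fun g b hb hgb => ?_
  have hga : r a (g • a) := r.trans hgb (r.symm (hr g a b hb))
  ext y
  simp only [Set.mem_smul_set_iff_inv_smul_mem, Set.mem_ofPred_eq]
  constructor
  · exact fun h => by simpa using r.trans hga (hr g _ _ h)
  · exact fun h => by simpa using hr g⁻¹ _ _ (r.trans (r.symm hga) h)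

theorem isPrimitiveAction_of_isPreprimitive [IsPreprimitive G X] : IsPrimitiveAction G X := by
  refine ⟨exists_smul_eq G, fun r hr => or_iff_not_imp_left.2 fun hbot => ?_⟩
  obtain ⟨a, b, hab, hne⟩ : ∃ a b, r a b ∧ a ≠ b := by
    by_contra! h
    exact hbot (Setoid.ext fun a b => ⟨h a b, fun hab => hab ▸ r.refl a⟩)
  have huniv := (isBlock_setOf_rel hr a).subsingleton_or_eq_univ.resolve_left
    fun hs => hne (hs (r.refl a) hab)
  have hrel : ∀ y, r a y := Set.eq_univ_iff_forall.1 huniv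
  exact Setoid.eq_top_iff.2 fun x y => r.trans (r.symm (hrel x)) (hrel y)

end MulAction

namespace QuotientGroup

variable {G : Type*} [Group G]

theorem mem_normalizer_of_le_stabilizer {H : Subgroup G} [Finite H] {g : G}
    (hle : H ≤ stabilizer G (g : G ⧸ H)) : g ∈ Subgroup.normalizer (H : Set G) := by
  have hg : ((g : G) : G ⧸ H) = g • ((1 : G) : G ⧸ H) := by simp
  rw [hg, stabilizer_smul_eq_stabilizer_map_conj, stabilizer_quotient] at hle
  rw [Subgroup.mem_normalizer_iff_map_conj_eq]
  let e := H.equivMapOfInjective (MulAut.conj g).toMonoidHom (MulAut.conj g).injective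
  have := Finite.of_equiv _ e.toEquiv
  exact (Subgroup.eq_of_le_of_card_ge hle (Nat.card_congr e.toEquiv).ge).symm

end QuotientGroup

namespace Subgroup

variable {G : Type*} [Group G]

theorem finite_of_forall_eq_bot_or_eq_top (h : ∀ K : Subgroup G, K = ⊥ ∨ K = ⊤) : Finite G := by
  rcases subsingleton_or_nontrivial G with hG | hG
  · exact Finite.of_subsingleton
  -- `G` is generated by any `g ≠ 1`, hence abelian, hence a simple abelian group.
  obtain ⟨g, hg⟩ := exists_ne (1 : G)
  have : IsCyclic G := ⟨g, (eq_top_iff' _).1 ((h _).resolve_left (zpowers_ne_bot.2 hg))⟩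
  let _ := IsCyclic.commGroup (α := G)
  have : IsSimpleGroup G := ⟨fun N _ => h N⟩
  exact IsSimpleGroup.finite

section ForallCardEq

variable {p : ℕ} (hsub : ∀ K : Subgroup G, K ≠ ⊥ → K ≠ ⊤ → Nat.card K = p)
include hsub

theorem isCoatom_of_forall_card_eq (hp : p ≠ 0) {K : Subgroup G} (hbot : K ≠ ⊥)
    (htop : K ≠ ⊤) : IsCoatom K := by
  refine ⟨htop, fun L hKL => by_contra fun hL => hKL.ne ?_⟩
  have hLbot : L ≠ ⊥ := ne_bot_of_gt hKL
  have : Finite L := Nat.finite_of_card_ne_zero (hsub L hLbot hL ▸ hp)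
  exact eq_of_le_of_card_ge hKL.le (by rw [hsub K hbot htop, hsub L hLbot hL])

theorem not_normal_of_forall_card_eq [Infinite G] (hp : p ≠ 0) {N : Subgroup G}
    (hbot : N ≠ ⊥) (htop : N ≠ ⊤) : ¬ N.Normal := by
  intro hN
  have hmax := isCoatom_of_forall_card_eq hsub hp hbot htop
  have hmk := QuotientGroup.mk'_surjective N
  have : Finite (G ⧸ N) := finite_of_forall_eq_bot_or_eq_top fun M => by
    rcases hmax.le_iff.1 (QuotientGroup.le_comap_mk' N M) with h | h
    · exact .inr (comap_injective hmk (by rw [h, comap_top]))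
    · exact .inl (comap_injective hmk (by rw [h, MonoidHom.comap_bot, QuotientGroup.ker_mk']))
  have : Finite N := Nat.finite_of_card_ne_zero (hsub N hbot htop ▸ hp)
  have := Finite.of_subgroup_quotient N
  exact not_finite G

theorem normalCore_eq_bot_of_forall_card_eq [Infinite G] (hp : p ≠ 0) {H : Subgroup G}
    (htop : H ≠ ⊤) : H.normalCore = ⊥ := by
  by_contra hbot
  refine not_normal_of_forall_card_eq hsub hp hbot (fun hcore => htop ?_) H.normalCore_normal
  exact top_le_iff.1 (hcore ▸ H.normalCore_le)

theorem normalizer_eq_self_of_forall_card_eq [Infinite G] (hp : p ≠ 0) {H : Subgroup G}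
    (hbot : H ≠ ⊥) (htop : H ≠ ⊤) : normalizer (H : Set G) = H :=
  ((isCoatom_of_forall_card_eq hsub hp hbot htop).le_iff.1 le_normalizer).resolve_left
    fun h => not_normal_of_forall_card_eq hsub hp hbot htop (normalizer_eq_top_iff.1 h)

theorem card_orbit_stabilizer_eq_of_forall_card_eq [Infinite G] (hp : p.Prime) {H : Subgroup G}
    (hbot : H ≠ ⊥) (htop : H ≠ ⊤) {x : G ⧸ H} (hx : x ≠ ((1 : G) : G ⧸ H)) :
    Nat.card (orbit (stabilizer G ((1 : G) : G ⧸ H)) x) = p := by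
  set S := stabilizer G ((1 : G) : G ⧸ H)
  have hSH : S = H := stabilizer_quotient H
  have hH : Nat.card H = p := hsub H hbot htop
  have : Finite H := Nat.finite_of_card_ne_zero (hH ▸ hp.ne_zero)
  have hS : Nat.card S = p := by rw [hSH, hH]
  have : Finite S := Nat.finite_of_card_ne_zero (hS ▸ hp.ne_zero)
  rw [Nat.card_coe_set_eq, ← index_stabilizer]
  refine ((Nat.dvd_prime hp).1 (hS ▸ index_dvd_card _)).resolve_left fun h1 => hx ?_
  rw [index_eq_one] at h1
  induction x using QuotientGroup.induction_on with | H g =>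
  have hle : H ≤ stabilizer G (g : G ⧸ H) := fun h hh =>
    (h1 ▸ mem_top (⟨h, hSH ▸ hh⟩ : S) : (⟨h, _⟩ : S) ∈ stabilizer S (g : G ⧸ H))
  have hg : g ∈ H := normalizer_eq_self_of_forall_card_eq hsub hp.ne_zero hbot htop ▸
    QuotientGroup.mem_normalizer_of_le_stabilizer hle
  exact QuotientGroup.eq.2 (by simpa using hg)

end ForallCardEq

end Subgroup

theorem stmt5 {G : Type*} [Group G] [Infinite G] (p : ℕ) (hp : p.Prime)
    (hsub : ∀ K : Subgroup G, K ≠ ⊥ → K ≠ ⊤ → Nat.card K = p)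
    (H : Subgroup G) (hHbot : H ≠ ⊥) (hHtop : H ≠ ⊤) :
    (∀ g : G, (∀ x : G ⧸ H, g • x = x) → g = 1) ∧
    IsPrimitiveAction G (G ⧸ H) ∧
    (∀ x : G ⧸ H, x ≠ ((1 : G) : G ⧸ H) →
      Nat.card (MulAction.orbit (MulAction.stabilizer G ((1 : G) : G ⧸ H)) x) = p) := by
  have : Nontrivial (G ⧸ H) := QuotientGroup.nontrivial_iff.2 hHtop
  have : IsPreprimitive G (G ⧸ H) := by
    rw [← isCoatom_stabilizer_iff_preprimitive G ((1 : G) : G ⧸ H), stabilizer_quotient]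
    exact Subgroup.isCoatom_of_forall_card_eq hsub hp.ne_zero hHbot hHtop
  refine ⟨fun g hg => ?_, isPrimitiveAction_of_isPreprimitive,
    fun x hx => Subgroup.card_orbit_stabilizer_eq_of_forall_card_eq hsub hp hHbot hHtop hx⟩
  have hker : g ∈ H.normalCore := by
    rw [Subgroup.normalCore_eq_ker]
    exact Equiv.ext hg
  simpa [Subgroup.normalCore_eq_bot_of_forall_card_eq hsub hp.ne_zero hHtop] using hker
end

section
/- Let Γ be a connected infinite vertex-transitive and arc-transitive locally finite digraph with finite in- and out-valencies, and fix α ∈ VΓ. For γ at distance r from α define c(γ) = |S₁(α) ∩ S_{r−1}(γ)| and b(γ) = |S₁(α) ∩ S_{r+1}(γ)|. If there exists R₀ such that c(β) = c(γ) and b(β) = b(γ) for all β, γ at distance more than R₀ from α, then Γ has more than one end: there exists an infinite set s of vertices whose complement is infinite and such that only finitely many edges join s to its complement. -/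
/-!
By vertex-transitivity the numbers `c` and `b` are the same for all pairs of vertices at
distance `> R₀`. Comparing these counts for adjacent vertices `y, y'` far from `x` shows that
the set of neighbours of `x` closer to `y`, and the set of those farther from `y`, do not change
along edges far from `x`. If every finite edge-cut had a finite side, all vertices far from `x`
but a finite number would lie in one component of the complement of a ball, so these sets would
be eventually constant in `y`. Walking along edges, `y ↦ d(y, p) - d(y, q)` is then eventually
constant for all `p, q`. But for `d(p, q) = R₀ + 1` this difference is `-(R₀ + 1)` far along
geodesic rays from `q` through `p` and `R₀ + 1` along rays from `p` through `q`; such rays exist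
because `b > 0` beyond `R₀`.
-/

open Filter

namespace SimpleGraph

variable {V V' : Type*} {G : SimpleGraph V} {G' : SimpleGraph V'}

theorem Hom.dist_map_le (f : G →g G') {u v : V} (h : G.Reachable u v) :
    G'.dist (f u) (f v) ≤ G.dist u v := by
  obtain ⟨p, hp⟩ := h.exists_walk_length_eq_dist
  simpa [hp] using dist_le (p.map f)

theorem Iso.dist_apply (g : G ≃g G') (u v : V) : G'.dist (g u) (g v) = G.dist u v := by
  by_cases h : G.Reachable u v
  · refine le_antisymm (Hom.dist_map_le g.toHom h) ?_
    simpa using Hom.dist_map_le g.symm.toHom (Iso.reachable_iff (φ := g).mpr h)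
  · rw [dist_eq_zero_of_not_reachable h, dist_eq_zero_of_not_reachable (mt Iso.reachable_iff.mp h)]

theorem Connected.exists_adj_dist_add_one_eq (hG : G.Connected) {x v : V} (h : 0 < G.dist x v) :
    ∃ w, G.Adj v w ∧ G.dist x w + 1 = G.dist x v := by
  obtain ⟨p, hp⟩ := hG.exists_walk_length_eq_dist v x
  cases p with
  | nil => simp at h
  | @cons _ w _ hadj q =>
    refine ⟨w, hadj, le_antisymm ?_ ?_⟩
    · have := dist_le q.reverse
      rw [Walk.length_cons, dist_comm] at hp
      simp only [Walk.length_reverse] at this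
      omega
    · exact (hG.dist_triangle).trans (by rw [dist_eq_one_iff_adj.mpr hadj.symm])

theorem Connected.exists_dist_eq_of_le (hG : G.Connected) {x v : V} {n : ℕ}
    (h : n ≤ G.dist x v) : ∃ u, G.dist x u = n := by
  obtain ⟨k, hk⟩ := Nat.exists_eq_add_of_le h
  induction k generalizing v with
  | zero => exact ⟨v, hk⟩
  | succ k ih =>
    obtain ⟨w, -, hw⟩ := hG.exists_adj_dist_add_one_eq (x := x) (v := v) (by omega)
    exact ih (v := w) (by omega) (by omega)

theorem Connected.finite_setOf_dist_le [G.LocallyFinite] (hG : G.Connected) (x : V) (n : ℕ) :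
    {v | G.dist x v ≤ n}.Finite := by
  induction n with
  | zero => simp [hG.dist_eq_zero_iff]
  | succ n ih =>
    refine (ih.union (ih.biUnion fun w _ => (G.neighborSet w).toFinite)).subset fun v hv => ?_
    rcases Nat.lt_or_ge n (G.dist x v) with hlt | hle
    · obtain ⟨w, hadj, hw⟩ := hG.exists_adj_dist_add_one_eq (x := x) (v := v) (by omega)
      exact Or.inr (Set.mem_biUnion (show G.dist x w ≤ n by simp at hv; omega) hadj.symm)
    · exact Or.inl hle

theorem Connected.exists_dist_eq [G.LocallyFinite] [Infinite V] (hG : G.Connected) (x : V)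
    (n : ℕ) : ∃ v, G.dist x v = n := by
  obtain ⟨v, hv⟩ := (hG.finite_setOf_dist_le x n).infinite_compl.nonempty
  exact hG.exists_dist_eq_of_le (le_of_lt (not_le.mp hv))

/-- The paper's `c(γ)` and `b(γ)` are `(Γ.closerNbrs α γ).ncard` and
`(Γ.fartherNbrs α γ).ncard`. -/
def closerNbrs (G : SimpleGraph V) (x y : V) : Set V :=
  {w | G.dist x w = 1 ∧ G.dist y w = G.dist x y - 1}

def fartherNbrs (G : SimpleGraph V) (x y : V) : Set V :=
  {w | G.dist x w = 1 ∧ G.dist y w = G.dist x y + 1}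

def IsDistanceRegularBeyond (G : SimpleGraph V) (R : ℕ) : Prop :=
  ∀ x y x' y', R < G.dist x y → R < G.dist x' y' →
    (G.closerNbrs x y).ncard = (G.closerNbrs x' y').ncard ∧
      (G.fartherNbrs x y).ncard = (G.fartherNbrs x' y').ncard

def edgeBoundary (G : SimpleGraph V) (s : Set V) : Set (V × V) :=
  {e | e.1 ∈ s ∧ e.2 ∈ sᶜ ∧ G.Adj e.1 e.2}

def FiniteCutsHaveFiniteSide (G : SimpleGraph V) : Prop :=
  ∀ s : Set V, s.Infinite → (G.edgeBoundary s).Finite → sᶜ.Finite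

theorem Iso.image_closerNbrs (g : G ≃g G') (x y : V) :
    g '' G.closerNbrs x y = G'.closerNbrs (g x) (g y) := by
  ext w
  obtain ⟨u, rfl⟩ := g.surjective w
  simp only [closerNbrs, g.injective.mem_set_image, Set.mem_ofPred_eq, g.dist_apply]

theorem Iso.image_fartherNbrs (g : G ≃g G') (x y : V) :
    g '' G.fartherNbrs x y = G'.fartherNbrs (g x) (g y) := by
  ext w
  obtain ⟨u, rfl⟩ := g.surjective w
  simp only [fartherNbrs, g.injective.mem_set_image, Set.mem_ofPred_eq, g.dist_apply]

theorem isDistanceRegularBeyond_of_forall_iso {R : ℕ}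
    (htrans : ∀ u v, ∃ g : G ≃g G, g u = v) (q : V)
    (hq : ∀ y y', R < G.dist q y → R < G.dist q y' →
      (G.closerNbrs q y).ncard = (G.closerNbrs q y').ncard ∧
        (G.fartherNbrs q y).ncard = (G.fartherNbrs q y').ncard) :
    G.IsDistanceRegularBeyond R := by
  have transport : ∀ x y, ∃ y₀, G.dist q y₀ = G.dist x y ∧
      (G.closerNbrs x y).ncard = (G.closerNbrs q y₀).ncard ∧
        (G.fartherNbrs x y).ncard = (G.fartherNbrs q y₀).ncard := by
    intro x y
    obtain ⟨g, rfl⟩ := htrans x q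
    refine ⟨g y, g.dist_apply x y, ?_, ?_⟩
    · rw [← g.image_closerNbrs, Set.ncard_image_of_injective _ g.injective]
    · rw [← g.image_fartherNbrs, Set.ncard_image_of_injective _ g.injective]
  intro x y x' y' h h'
  obtain ⟨y₀, hd, hc, hb⟩ := transport x y
  obtain ⟨y₀', hd', hc', hb'⟩ := transport x' y'
  rw [hc, hb, hc', hb']
  exact hq y₀ y₀' (hd ▸ h) (hd' ▸ h')

theorem closerNbrs_subset_neighborSet (x y : V) : G.closerNbrs x y ⊆ G.neighborSet x :=
  fun _ hw => dist_eq_one_iff_adj.mp hw.1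

theorem fartherNbrs_subset_neighborSet (x y : V) : G.fartherNbrs x y ⊆ G.neighborSet x :=
  fun _ hw => dist_eq_one_iff_adj.mp hw.1

section DistanceRegularBeyond

variable [G.LocallyFinite] {R : ℕ} {x y y' : V}

theorem closerNbrs_eq_of_dist_succ (hG : G.Connected) (hR : G.IsDistanceRegularBeyond R)
    (hadj : G.Adj y y') (hd : G.dist x y' = G.dist x y + 1) (hfar : R < G.dist x y) :
    G.closerNbrs x y = G.closerNbrs x y' := by
  refine Set.eq_of_subset_of_ncard_le ?_ (hR x y' x y (by omega) hfar).1.le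
    ((G.neighborSet x).toFinite.subset (closerNbrs_subset_neighborSet x y'))
  rintro u ⟨hxu, hyu⟩
  refine ⟨hxu, ?_⟩
  have := hG.dist_triangle (u := y') (v := y) (w := u)
  have := hG.dist_triangle (u := x) (v := u) (w := y')
  have := dist_eq_one_iff_adj.mpr hadj.symm
  have : G.dist u y' = G.dist y' u := dist_comm
  omega

theorem fartherNbrs_eq_of_dist_succ (hG : G.Connected) (hR : G.IsDistanceRegularBeyond R)
    (hadj : G.Adj y y') (hd : G.dist x y' = G.dist x y + 1) (hfar : R < G.dist x y) :
    G.fartherNbrs x y = G.fartherNbrs x y' := by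
  refine (Set.eq_of_subset_of_ncard_le ?_ (hR x y x y' hfar (by omega)).2.le
    ((G.neighborSet x).toFinite.subset (fartherNbrs_subset_neighborSet x y))).symm
  rintro u ⟨hxu, hyu⟩
  refine ⟨hxu, ?_⟩
  have := hG.dist_triangle (u := y) (v := x) (w := u)
  have := hG.dist_triangle (u := y') (v := y) (w := u)
  have := dist_eq_one_iff_adj.mpr hadj.symm
  have : G.dist y x = G.dist x y := dist_comm
  omega

theorem closerNbrs_subset_of_dist_eq (hG : G.Connected) (hR : G.IsDistanceRegularBeyond R)
    (hadj : G.Adj y y') (hd : G.dist x y' = G.dist x y) (hfar : R + 2 ≤ G.dist x y) :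
    G.closerNbrs x y ⊆ G.closerNbrs x y' := by
  rintro u ⟨hxu, hyu⟩
  refine ⟨hxu, ?_⟩
  have := hG.dist_triangle (u := y') (v := y) (w := u)
  have := hG.dist_triangle (u := x) (v := u) (w := y')
  have := dist_eq_one_iff_adj.mpr hadj.symm
  have : G.dist u y' = G.dist y' u := dist_comm
  have : G.dist u y = G.dist y u := dist_comm
  by_contra hne
  -- otherwise `d(u, y') = d(u, y) + 1`, so `x ∈ fartherNbrs u y = fartherNbrs u y'`
  have hx : x ∈ G.fartherNbrs u y := ⟨by rwa [dist_comm], by rw [dist_comm]; omega⟩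
  rw [fartherNbrs_eq_of_dist_succ hG hR hadj (by omega) (by omega)] at hx
  have := hx.2
  have : G.dist y' x = G.dist x y' := dist_comm
  omega

theorem fartherNbrs_subset_of_dist_eq (hG : G.Connected) (hR : G.IsDistanceRegularBeyond R)
    (hadj : G.Adj y y') (hd : G.dist x y' = G.dist x y) (hfar : R + 2 ≤ G.dist x y) :
    G.fartherNbrs x y ⊆ G.fartherNbrs x y' := by
  rintro u ⟨hxu, hyu⟩
  refine ⟨hxu, ?_⟩
  have := hG.dist_triangle (u := y') (v := x) (w := u)
  have := hG.dist_triangle (u := y) (v := y') (w := u)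
  have := dist_eq_one_iff_adj.mpr hadj
  have : G.dist y' x = G.dist x y' := dist_comm
  have : G.dist u y' = G.dist y' u := dist_comm
  have : G.dist u y = G.dist y u := dist_comm
  by_contra hne
  have hx : x ∈ G.closerNbrs u y := ⟨by rwa [dist_comm], by rw [dist_comm]; omega⟩
  rw [← closerNbrs_eq_of_dist_succ hG hR hadj.symm (by omega) (by omega)] at hx
  have := hx.2
  omega

theorem closerNbrs_eq_and_fartherNbrs_eq_of_adj (hG : G.Connected)
    (hR : G.IsDistanceRegularBeyond R) (hadj : G.Adj y y') (hy : R + 2 ≤ G.dist x y)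
    (hy' : R + 2 ≤ G.dist x y') :
    G.closerNbrs x y = G.closerNbrs x y' ∧ G.fartherNbrs x y = G.fartherNbrs x y' := by
  have := hG.dist_triangle (u := x) (v := y) (w := y')
  have := hG.dist_triangle (u := x) (v := y') (w := y)
  have := dist_eq_one_iff_adj.mpr hadj
  have : G.dist y' y = G.dist y y' := dist_comm
  rcases Nat.lt_trichotomy (G.dist x y) (G.dist x y') with h | h | h
  · exact ⟨closerNbrs_eq_of_dist_succ hG hR hadj (by omega) (by omega),
      fartherNbrs_eq_of_dist_succ hG hR hadj (by omega) (by omega)⟩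
  · exact ⟨(closerNbrs_subset_of_dist_eq hG hR hadj h.symm hy).antisymm
        (closerNbrs_subset_of_dist_eq hG hR hadj.symm h hy'),
      (fartherNbrs_subset_of_dist_eq hG hR hadj h.symm hy).antisymm
        (fartherNbrs_subset_of_dist_eq hG hR hadj.symm h hy')⟩
  · exact ⟨(closerNbrs_eq_of_dist_succ hG hR hadj.symm (by omega) (by omega)).symm,
      (fartherNbrs_eq_of_dist_succ hG hR hadj.symm (by omega) (by omega)).symm⟩

end DistanceRegularBeyond

theorem ComponentCompl.eq_of_mem {K : Set V} {β : Sort*} {f : V → β}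
    (hf : ∀ v w, v ∉ K → w ∉ K → G.Adj v w → f v = f w) {C : G.ComponentCompl K}
    {v w : V} (hv : v ∈ C) (hw : w ∈ C) : f v = f w := by
  obtain ⟨hvK, rfl⟩ := hv
  obtain ⟨hwK, hw⟩ := hw
  exact congrArg (ComponentCompl.lift (fun v _ => f v) fun v w hv hw => hf v w hv hw) hw.symm

theorem exists_componentCompl_compl_finite [G.LocallyFinite] [Infinite V]
    (hG : G.Preconnected) (K : Finset V)
    (hcut : G.FiniteCutsHaveFiniteSide) :
    ∃ C : G.ComponentCompl K, (C : Set V)ᶜ.Finite := by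
  have := Fact.mk hG
  have hcover : (K : Set V)ᶜ ⊆ ⋃ C : G.ComponentCompl K, (C : Set V) :=
    fun v hv => Set.mem_iUnion.mpr ⟨_, G.componentComplMk_mem hv⟩
  obtain ⟨C, hC⟩ : ∃ C : G.ComponentCompl K, (C : Set V).Infinite := by
    by_contra! h
    exact K.finite_toSet.infinite_compl ((Set.finite_iUnion h).subset hcover)
  refine ⟨C, hcut _ hC (((K.finite_toSet.biUnion fun k _ => (G.neighborSet k).toFinite).prod
    K.finite_toSet).subset ?_)⟩
  rintro ⟨a, b⟩ ⟨ha, hb, hab⟩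
  have hbK : b ∈ K := by_contra fun hbK => hb (C.mem_of_adj a b ha hbK hab)
  exact ⟨Set.mem_biUnion hbK hab.symm, hbK⟩

open Classical in
theorem dist_sub_dist_of_adj (hG : G.Connected) {a c : V} (hadj : G.Adj a c) (v : V) :
    (G.dist v c : ℤ) - G.dist v a =
      if c ∈ G.closerNbrs a v then -1 else if c ∈ G.fartherNbrs a v then 1 else 0 := by
  have hac := dist_eq_one_iff_adj.mpr hadj
  have hva : G.dist v a = 0 → G.dist v c = 1 := fun h => by rwa [hG.dist_eq_zero_iff.mp h]
  have hav : G.dist a v = G.dist v a := dist_comm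
  simp only [closerNbrs, fartherNbrs, Set.mem_ofPred_eq, hac, hav, true_and]
  rcases hadj.diff_dist_adj (u := v) with h | h | h <;> split_ifs <;> omega

section OneEnded

variable [G.LocallyFinite] [Infinite V] {R : ℕ}

theorem exists_eventually_closerNbrs_eq_and_fartherNbrs_eq (hG : G.Connected)
    (hR : G.IsDistanceRegularBeyond R)
    (hcut : G.FiniteCutsHaveFiniteSide) (q : V) :
    ∃ S T : Set V, ∀ᶠ v in cofinite, G.closerNbrs q v = S ∧ G.fartherNbrs q v = T := by
  obtain ⟨C, hC⟩ := exists_componentCompl_compl_finite hG.preconnected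
    (hG.finite_setOf_dist_le q (R + 1)).toFinset hcut
  obtain ⟨v₀, hv₀⟩ := C.nonempty
  refine ⟨G.closerNbrs q v₀, G.fartherNbrs q v₀, ?_⟩
  filter_upwards [eventually_cofinite.mpr hC] with v hv
  refine Prod.ext_iff.mp (C.eq_of_mem (f := fun v => (G.closerNbrs q v, G.fartherNbrs q v))
    (fun a b ha hb hab => Prod.ext_iff.mpr ?_) hv hv₀)
  simp only [Set.Finite.coe_toFinset, Set.mem_ofPred_eq, not_le] at ha hb
  exact closerNbrs_eq_and_fartherNbrs_eq_of_adj hG hR hab ha hb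

theorem exists_eventually_dist_sub_dist_eq (hG : G.Connected) (hR : G.IsDistanceRegularBeyond R)
    (hcut : G.FiniteCutsHaveFiniteSide) (p q : V) :
    ∃ F : ℤ, ∀ᶠ v in cofinite, (G.dist v p : ℤ) - G.dist v q = F := by
  classical
  obtain ⟨w⟩ := hG.preconnected q p
  induction w with
  | nil => exact ⟨0, .of_forall fun v => sub_self _⟩
  | @cons a c _ hadj _ ih =>
    obtain ⟨F, hF⟩ := ih
    obtain ⟨S, T, hST⟩ := exists_eventually_closerNbrs_eq_and_fartherNbrs_eq hG hR hcut a
    refine ⟨F + if c ∈ S then -1 else if c ∈ T then 1 else 0, ?_⟩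
    filter_upwards [hF, hST] with v hv ⟨hS, hT⟩
    have hstep := dist_sub_dist_of_adj hG hadj v
    rw [hS, hT] at hstep
    omega

theorem fartherNbrs_nonempty (hG : G.Connected) (hR : G.IsDistanceRegularBeyond R) {x y : V}
    (h : R < G.dist x y) : (G.fartherNbrs x y).Nonempty := by
  obtain ⟨v, hv⟩ := hG.exists_dist_eq y (R + 2)
  obtain ⟨p, hvp, hp⟩ := hG.exists_adj_dist_add_one_eq (x := y) (v := v) (by omega)
  have hpy : G.dist p y = G.dist y p := dist_comm
  have hmem : v ∈ G.fartherNbrs p y := ⟨dist_eq_one_iff_adj.mpr hvp.symm, by omega⟩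
  refine Set.nonempty_of_ncard_ne_zero ?_
  rw [(hR x y p y h (by omega)).2]
  exact ((Set.ncard_pos ((G.neighborSet p).toFinite.subset
    (fartherNbrs_subset_neighborSet p y))).mpr ⟨v, hmem⟩).ne'

theorem exists_adj_dist_eq_add_one (hG : G.Connected) (hR : G.IsDistanceRegularBeyond R)
    {x y : V} (h : R < G.dist x y) : ∃ y', G.Adj y y' ∧ G.dist x y' = G.dist x y + 1 := by
  obtain ⟨y', hyy', hxy'⟩ := fartherNbrs_nonempty hG hR (x := y) (y := x) (by rwa [dist_comm])
  exact ⟨y', dist_eq_one_iff_adj.mp hyy', by rw [hxy', dist_comm]⟩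

theorem infinite_setOf_dist_eq_add_dist (hG : G.Connected) (hR : G.IsDistanceRegularBeyond R)
    {x y : V} (h : R < G.dist x y) : {w | G.dist x w = G.dist x y + G.dist y w}.Infinite := by
  have hray : ∀ t, ∃ w, G.dist x w = G.dist x y + t ∧ G.dist y w = t := by
    intro t
    induction t with
    | zero => exact ⟨y, by simp⟩
    | succ t ih =>
      obtain ⟨w, hxw, hyw⟩ := ih
      obtain ⟨w', hadj, hxw'⟩ := exists_adj_dist_eq_add_one hG hR (x := x) (y := w) (by omega)
      have := hG.dist_triangle (u := y) (v := w) (w := w')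
      have := hG.dist_triangle (u := x) (v := y) (w := w')
      have := dist_eq_one_iff_adj.mpr hadj
      exact ⟨w', by omega, by omega⟩
  have himage : G.dist y '' {w | G.dist x w = G.dist x y + G.dist y w} = Set.univ :=
    Set.eq_univ_of_forall fun t =>
      let ⟨w, hxw, hyw⟩ := hray t
      ⟨w, by rwa [Set.mem_ofPred_eq, hyw], hyw⟩
  exact .of_image (G.dist y) (himage ▸ Set.infinite_univ)

theorem exists_finite_edgeBoundary_of_isDistanceRegularBeyond (hG : G.Connected)
    (hR : G.IsDistanceRegularBeyond R) :
    ∃ s : Set V, s.Infinite ∧ sᶜ.Infinite ∧ (G.edgeBoundary s).Finite := by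
  by_contra hne
  have hcut : G.FiniteCutsHaveFiniteSide :=
    fun s hs hb => Set.not_infinite.mp fun hc => hne ⟨s, hs, hc, hb⟩
  obtain ⟨x⟩ : Nonempty V := inferInstance
  obtain ⟨y, hxy⟩ := hG.exists_dist_eq x (R + 1)
  obtain ⟨F, hF⟩ := exists_eventually_dist_sub_dist_eq hG hR hcut y x
  -- `d(v, y) - d(v, x)` is `-d(x, y)` on geodesic rays from `x` through `y`,
  -- and `d(x, y)` on those from `y` through `x`
  obtain ⟨w, hFw, hw⟩ := (hF.and_frequently (frequently_cofinite_iff_infinite.mpr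
    (infinite_setOf_dist_eq_add_dist hG hR (x := x) (y := y) (by omega)))).exists
  obtain ⟨u, hFu, hu⟩ := (hF.and_frequently (frequently_cofinite_iff_infinite.mpr
    (infinite_setOf_dist_eq_add_dist hG hR (x := y) (y := x) (by rw [dist_comm]; omega)))).exists
  have : G.dist y x = G.dist x y := dist_comm
  have : G.dist w y = G.dist y w := dist_comm
  have : G.dist w x = G.dist x w := dist_comm
  have : G.dist u y = G.dist y u := dist_comm
  have : G.dist u x = G.dist x u := dist_comm
  omega

end OneEnded

end SimpleGraph

theorem stmt13_general {V : Type*} [Infinite V]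
    -- D is the arc relation of the digraph, Γ its underlying undirected graph
    (D : V → V → Prop)
    (Γ : SimpleGraph V)
    (hΓ : ∀ x y : V, Γ.Adj x y ↔ (x ≠ y ∧ (D x y ∨ D y x)))
    (hconn : Γ.Connected)
    (hlocfin : ∀ v : V, {w : V | D v w}.Finite ∧ {w : V | D w v}.Finite)
    (hvtxtrans : ∀ u v : V, ∃ g : Equiv.Perm V,
      (∀ a b : V, D (g a) (g b) ↔ D a b) ∧ g u = v)
    (α : V) (R₀ : ℕ)
    (hcb : ∀ β γ : V, R₀ < Γ.dist α β → R₀ < Γ.dist α γ →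
      {w : V | Γ.dist α w = 1 ∧ Γ.dist β w = Γ.dist α β - 1}.ncard =
        {w : V | Γ.dist α w = 1 ∧ Γ.dist γ w = Γ.dist α γ - 1}.ncard ∧
      {w : V | Γ.dist α w = 1 ∧ Γ.dist β w = Γ.dist α β + 1}.ncard =
        {w : V | Γ.dist α w = 1 ∧ Γ.dist γ w = Γ.dist α γ + 1}.ncard) :
    ∃ s : Set V, s.Infinite ∧ (sᶜ).Infinite ∧
      {e : V × V | e.1 ∈ s ∧ e.2 ∈ sᶜ ∧ Γ.Adj e.1 e.2}.Finite := by
  have : Γ.LocallyFinite := fun v =>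
    ((hlocfin v).1.union (hlocfin v).2 |>.subset fun w hw => ((hΓ v w).mp hw).2).fintype
  have hiso : ∀ u v, ∃ g : Γ ≃g Γ, g u = v := fun u v => by
    obtain ⟨g, hg, hgu⟩ := hvtxtrans u v
    exact ⟨⟨g, fun {a b} => by simp only [hΓ, g.injective.ne_iff, hg]⟩, hgu⟩
  exact SimpleGraph.exists_finite_edgeBoundary_of_isDistanceRegularBeyond hconn
    (SimpleGraph.isDistanceRegularBeyond_of_forall_iso hiso α hcb)

theorem stmt13 {V : Type*} [Infinite V]
    -- D is the arc relation of the digraph, Γ its underlying undirected graph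
    (D : V → V → Prop)
    (Γ : SimpleGraph V)
    (hΓ : ∀ x y : V, Γ.Adj x y ↔ (x ≠ y ∧ (D x y ∨ D y x)))
    (hconn : Γ.Connected)
    (hlocfin : ∀ v : V, {w : V | D v w}.Finite ∧ {w : V | D w v}.Finite)
    (hvtxtrans : ∀ u v : V, ∃ g : Equiv.Perm V,
      (∀ a b : V, D (g a) (g b) ↔ D a b) ∧ g u = v)
    (harctrans : ∀ u v x y : V, D u v → D x y →
      ∃ g : Equiv.Perm V, (∀ a b : V, D (g a) (g b) ↔ D a b) ∧ g u = x ∧ g v = y)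
    (α : V) (R₀ : ℕ)
    (hcb : ∀ β γ : V, R₀ < Γ.dist α β → R₀ < Γ.dist α γ →
      {w : V | Γ.dist α w = 1 ∧ Γ.dist β w = Γ.dist α β - 1}.ncard =
        {w : V | Γ.dist α w = 1 ∧ Γ.dist γ w = Γ.dist α γ - 1}.ncard ∧
      {w : V | Γ.dist α w = 1 ∧ Γ.dist β w = Γ.dist α β + 1}.ncard =
        {w : V | Γ.dist α w = 1 ∧ Γ.dist γ w = Γ.dist α γ + 1}.ncard) :
    ∃ s : Set V, s.Infinite ∧ (sᶜ).Infinite ∧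
      {e : V × V | e.1 ∈ s ∧ e.2 ∈ sᶜ ∧ Γ.Adj e.1 e.2}.Finite :=
  stmt13_general D Γ hΓ hconn hlocfin hvtxtrans α R₀ hcb
end

section
/- Let m ≥ 2, t ≥ 2, and consider the distance-transitive graph Γ = Γ(m, K_{t+1}) (connectivity one, lobes complete graphs on t+1 vertices, each vertex in m lobes), with G = Aut(Γ) and a fixed vertex α. Then for every r ≥ 1, the sphere S_r(α,Γ) is a single G_α-orbit of size m·(m−1)^{r−1}·t^r; consequently, arranging the subdegrees in non-decreasing order m₁ ≤ m₂ ≤ ⋯, one has lim_{r→∞} m_r^{1/r} = (m−1)·t = ((m−1)/m)·m₁. -/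
/-!
Measure distances from `α`. Since every cycle lies in a lobe, every lobe has a unique vertex
nearest to `α` (its gate), all its other vertices being one step further, and every vertex
`β ≠ α` lies in exactly one lobe of which it is not the gate. Numbering, at every vertex, the
lobes of which it is the gate, and in each of these lobes the `t` other vertices, identifies `Γ`
with a fixed graph on words in these numbers, `α` being the empty word and the sphere of radius
`r` the words of length `r`; counting words gives the sphere sizes. The numberings are arbitrary,
so they can be chosen along the path from `α` to any `γ` at distance `r` such that `γ` receives a
prescribed word of length `r`; composing two such identifications gives an automorphism fixing
`α` and moving `β` to `γ`.
-/

open Filter Set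

lemma Set.exists_bijOn_fin {α : Type*} {s : Set α} {n : ℕ} (hs : s.Finite) (h : s.ncard = n) :
    ∃ f : Fin n → α, BijOn f univ s := by
  have := hs.to_subtype
  let e := Finite.equivFinOfCardEq (by rwa [Nat.card_coe_set_eq] : Nat.card s = n)
  exact ⟨fun i => e.symm i, fun i _ => (e.symm i).2,
    fun i _ j _ hij => e.symm.injective (Subtype.ext hij),
    fun x hx => ⟨e ⟨x, hx⟩, trivial, by simp⟩⟩

lemma tendsto_rpow_inv_of_eventually_eq_mul_pow {f : ℕ → ℝ} {C b : ℝ} (hC : 0 < C) (hb : 0 ≤ b)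
    (hf : ∀ᶠ r in atTop, f r = C * b ^ r) :
    Tendsto (fun r : ℕ => f r ^ ((r : ℝ)⁻¹)) atTop (nhds b) := by
  have hC1 : Tendsto (fun r : ℕ => C ^ ((r : ℝ)⁻¹)) atTop (nhds 1) := by
    simpa [Function.comp_def] using
      (Real.continuousAt_const_rpow hC.ne').tendsto.comp tendsto_inv_atTop_nhds_zero_nat
  refine (by simpa using hC1.mul_const b : Tendsto (fun r : ℕ => C ^ ((r : ℝ)⁻¹) * b) _ _).congr' ?_
  filter_upwards [hf, eventually_ne_atTop 0] with r hr hr0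
  rw [hr, Real.mul_rpow hC.le (by positivity), Real.pow_rpow_inv_natCast hb hr0]

namespace SimpleGraph

variable {V : Type*} {Γ : SimpleGraph V}

lemma dist_le_length_of_mem_support {u v w : V} (p : Γ.Walk u w) (hv : v ∈ p.support) :
    Γ.dist u v ≤ p.length := by
  classical
  exact (dist_le _).trans (p.length_takeUntil_le_length hv)

lemma dist_lt_length_of_mem_support {u v w : V} (p : Γ.Walk u w) (hv : v ∈ p.support)
    (hvw : v ≠ w) : Γ.dist u v < p.length := by
  classical
  have hsplit := congrArg Walk.length (p.take_spec hv)
  rw [Walk.length_append] at hsplit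
  have hdrop : (p.dropUntil v hv).length ≠ 0 := fun h => hvw (Walk.eq_of_length_eq_zero h)
  have := dist_le (p.takeUntil v hv)
  omega

lemma Adj.dist_le_dist_add_one {α u v : V} (h : Γ.Adj u v) : Γ.dist α v ≤ Γ.dist α u + 1 := by
  rcases h.diff_dist_adj (u := α) with h' | h' | h' <;> omega

lemma Connected.exists_adj_dist_add_one (hconn : Γ.Connected) {α v : V} (hv : v ≠ α) :
    ∃ u, Γ.Adj u v ∧ Γ.dist α u + 1 = Γ.dist α v := by
  obtain ⟨p, hp⟩ := hconn.exists_walk_length_eq_dist v α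
  have hnil : ¬ p.Nil := by
    rw [Walk.not_nil_iff_lt_length, hp]
    exact hconn.pos_dist_of_ne hv
  obtain ⟨u, hvu, q, rfl⟩ := Walk.not_nil_iff.1 hnil
  have hq : Γ.dist α u ≤ q.length := dist_comm (G := Γ) ▸ dist_le q
  have := hvu.symm.dist_le_dist_add_one (α := α)
  rw [Walk.length_cons, dist_comm] at hp
  exact ⟨u, hvu.symm, by omega⟩

structure IsLobeDecomposition (Γ : SimpleGraph V) (L : Set (Set V)) : Prop where
  adj_of_mem : ∀ l ∈ L, ∀ x ∈ l, ∀ y ∈ l, x ≠ y → Γ.Adj x y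
  existsUnique_of_adj : ∀ x y, Γ.Adj x y → ∃! l, l ∈ L ∧ x ∈ l ∧ y ∈ l
  exists_subset_of_isCycle : ∀ (v : V) (c : Γ.Walk v v), c.IsCycle →
    ∃ l ∈ L, ∀ x ∈ c.support, x ∈ l

def IsGate (Γ : SimpleGraph V) (α : V) (l : Set V) (g : V) : Prop :=
  g ∈ l ∧ ∀ w ∈ l, w ≠ g → Γ.dist α w = Γ.dist α g + 1

def childLobes (Γ : SimpleGraph V) (L : Set (Set V)) (α v : V) : Set (Set V) :=
  {l ∈ L | Γ.IsGate α l v}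

namespace IsGate

variable {α g g' w : V} {l : Set V}

lemma eq (h : Γ.IsGate α l g) (h' : Γ.IsGate α l g') : g = g' := by
  by_contra hne
  have := h.2 g' h'.1 (Ne.symm hne)
  have := h'.2 g h.1 hne
  omega

lemma eq_root (h : Γ.IsGate α l g) (hα : α ∈ l) : g = α := by
  by_contra hne
  have := h.2 α hα (Ne.symm hne)
  simp at this

lemma ne_root (h : Γ.IsGate α l g) (hw : w ∈ l) (hwg : w ≠ g) : w ≠ α := by
  rintro rfl
  have := h.2 w hw hwg
  simp at this

end IsGate

lemma childLobes_root {L : Set (Set V)} {α : V} (hgate : ∀ l ∈ L, ∃ g, Γ.IsGate α l g) :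
    Γ.childLobes L α α = {l ∈ L | α ∈ l} := by
  ext l
  refine ⟨fun ⟨hl, hα⟩ => ⟨hl, hα.1⟩, fun ⟨hl, hα⟩ => ⟨hl, ?_⟩⟩
  obtain ⟨g, hg⟩ := hgate l hl
  exact hg.eq_root hα ▸ hg

namespace IsLobeDecomposition

variable {L : Set (Set V)} {l l₁ l₂ : Set V} {α v x y : V}

lemma eq_of_mem (hL : Γ.IsLobeDecomposition L) (h₁ : l₁ ∈ L) (h₂ : l₂ ∈ L) (hx₁ : x ∈ l₁)
    (hx₂ : x ∈ l₂) (hy₁ : y ∈ l₁) (hy₂ : y ∈ l₂) (hxy : x ≠ y) : l₁ = l₂ :=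
  (hL.existsUnique_of_adj x y (hL.adj_of_mem l₁ h₁ x hx₁ y hy₁ hxy)).unique
    ⟨h₁, hx₁, hy₁⟩ ⟨h₂, hx₂, hy₂⟩

lemma adj_iff (hL : Γ.IsLobeDecomposition L) : Γ.Adj x y ↔ x ≠ y ∧ ∃ l ∈ L, x ∈ l ∧ y ∈ l :=
  ⟨fun h => ⟨h.ne, (hL.existsUnique_of_adj x y h).exists⟩,
    fun ⟨hxy, l, hl, hx, hy⟩ => hL.adj_of_mem l hl x hx y hy hxy⟩

lemma mem_support (hL : Γ.IsLobeDecomposition L) (h₁ : l₁ ∈ L) (h₂ : l₂ ∈ L)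
    (hne : l₁ ≠ l₂) (hv₁ : v ∈ l₁) (hv₂ : v ∈ l₂) (hx : x ∈ l₁) (hxv : x ≠ v) (hy : y ∈ l₂)
    (hyv : y ≠ v) (p : Γ.Walk x y) : v ∈ p.support := by
  classical
  by_contra hv
  have hxy : x ≠ y := by
    rintro rfl
    exact hne (hL.eq_of_mem h₁ h₂ hv₁ hv₂ hx hy hxv.symm)
  let q := p.toPath
  have hvq : v ∉ q.1.support := fun h => hv (p.support_toPath_subset_support h)
  have hvx := hL.adj_of_mem l₁ h₁ v hv₁ x hx hxv.symm
  have hyv' := hL.adj_of_mem l₂ h₂ y hy v hv₂ hyv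
  have hcyc : (Walk.cons hvx (q.1.concat hyv')).IsCycle := by
    refine (Walk.cons_isCycle_iff _ _).2 ⟨q.2.concat hvq hyv', fun h => ?_⟩
    rw [Walk.edges_concat, List.concat_eq_append, List.mem_append, List.mem_singleton,
      Sym2.eq_iff] at h
    rcases h with h | ⟨rfl, -⟩ | ⟨-, rfl⟩
    · exact hvq (q.1.fst_mem_support_of_mem_edges h)
    · exact hyv rfl
    · exact hxy rfl
  obtain ⟨l, hl, hsub⟩ := hL.exists_subset_of_isCycle v _ hcyc
  have hlv := hsub v (by simp)
  have e₁ : l = l₁ := hL.eq_of_mem hl h₁ hlv hv₁ (hsub x (by simp)) hx hxv.symm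
  have e₂ : l = l₂ := hL.eq_of_mem hl h₂ hlv hv₂ (hsub y (by simp)) hy hyv.symm
  exact hne (e₁.symm.trans e₂)

lemma exists_isGate (hL : Γ.IsLobeDecomposition L) (hconn : Γ.Connected) (hl : l ∈ L)
    (hfin : l.Finite) (hne : l.Nonempty) : ∃ g, Γ.IsGate α l g := by
  obtain ⟨g, hg, hmin⟩ := Set.exists_min_image l (Γ.dist α) hfin hne
  refine ⟨g, hg, fun w hw hwg => ?_⟩
  obtain ⟨p, hp⟩ := hconn.exists_walk_length_eq_dist α w
  -- otherwise `w → α → u`, for `u` a neighbour of `g` nearer to `α`, would avoid the cut vertex `g`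
  have hgp : g ∈ p.support := by
    by_contra hgp
    have hgα : g ≠ α := fun h => hgp (h ▸ p.start_mem_support)
    obtain ⟨u, hug, hdu⟩ := hconn.exists_adj_dist_add_one hgα
    obtain ⟨l', ⟨hl', hu', hg'⟩, -⟩ := hL.existsUnique_of_adj u g hug
    have hul : u ∉ l := fun hu => by have := hmin u hu; omega
    obtain ⟨q, hq⟩ := hconn.exists_walk_length_eq_dist α u
    have hgq : g ∉ q.support := fun h => by
      have := dist_le_length_of_mem_support q h; omega
    have := hL.mem_support hl hl' (fun h => hul (h ▸ hu')) hg hg' hw hwg hu' hug.ne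
      (p.reverse.append q)
    rw [Walk.support_append, Walk.support_reverse, List.mem_append, List.mem_reverse] at this
    exact this.elim hgp fun h => hgq (List.mem_of_mem_tail h)
  have := dist_lt_length_of_mem_support p hgp (Ne.symm hwg)
  have := (hL.adj_of_mem l hl g hg w hw hwg.symm).dist_le_dist_add_one (α := α)
  omega

lemma eq_of_isGate_ne (hL : Γ.IsLobeDecomposition L) (hconn : Γ.Connected) {g₁ g₂ : V}
    (h₁ : l₁ ∈ L) (h₂ : l₂ ∈ L) (hg₁ : Γ.IsGate α l₁ g₁) (hg₂ : Γ.IsGate α l₂ g₂)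
    (hv₁ : v ∈ l₁) (hv₂ : v ∈ l₂) (hvg₁ : v ≠ g₁) (hvg₂ : v ≠ g₂) : l₁ = l₂ := by
  by_contra hne
  -- both gates are nearer to `α` than `v`, so geodesics from `α` to them avoid `v`
  have hd₁ := hg₁.2 v hv₁ hvg₁
  have hd₂ := hg₂.2 v hv₂ hvg₂
  obtain ⟨q₁, hq₁⟩ := hconn.exists_walk_length_eq_dist α g₁
  obtain ⟨q₂, hq₂⟩ := hconn.exists_walk_length_eq_dist α g₂
  have := hL.mem_support h₁ h₂ hne hv₁ hv₂ hg₁.1 hvg₁.symm hg₂.1 hvg₂.symm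
    (q₁.reverse.append q₂)
  rw [Walk.support_append, Walk.support_reverse, List.mem_append, List.mem_reverse] at this
  rcases this with h | h
  · have := dist_le_length_of_mem_support q₁ h; omega
  · have := dist_le_length_of_mem_support q₂ (List.mem_of_mem_tail h); omega

lemma exists_isGate_ne (hL : Γ.IsLobeDecomposition L) (hconn : Γ.Connected)
    (hgate : ∀ l ∈ L, ∃ g, Γ.IsGate α l g) (hv : v ≠ α) :
    ∃ l ∈ L, v ∈ l ∧ ∃ g, Γ.IsGate α l g ∧ g ≠ v := by
  obtain ⟨u, huv, hdu⟩ := hconn.exists_adj_dist_add_one hv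
  obtain ⟨l, ⟨hl, hu, hvl⟩, -⟩ := hL.existsUnique_of_adj u v huv
  obtain ⟨g, hg⟩ := hgate l hl
  refine ⟨l, hl, hvl, g, hg, ?_⟩
  rintro rfl
  have := hg.2 u hu huv.ne
  omega

lemma childLobes_eq_sdiff (hL : Γ.IsLobeDecomposition L) (hconn : Γ.Connected)
    (hgate : ∀ l ∈ L, ∃ g, Γ.IsGate α l g) {l₀ : Set V} {g₀ : V} (hl₀ : l₀ ∈ L)
    (hg₀ : Γ.IsGate α l₀ g₀) (hv : v ∈ l₀) (hvg : v ≠ g₀) :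
    Γ.childLobes L α v = {l ∈ L | v ∈ l} \ {l₀} := by
  ext l
  constructor
  · rintro ⟨hl, hg⟩
    refine ⟨⟨hl, hg.1⟩, fun h => hvg ?_⟩
    rw [mem_singleton_iff] at h
    exact (h ▸ hg).eq hg₀
  · rintro ⟨⟨hl, hvl⟩, hne⟩
    obtain ⟨g, hg⟩ := hgate l hl
    by_cases hgv : v = g
    · exact ⟨hl, hgv ▸ hg⟩
    · exact absurd (hL.eq_of_isGate_ne hconn hl hl₀ hg hg₀ hvl hv hgv hvg) hne

end IsLobeDecomposition

end SimpleGraph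

/- `none` is the root; `some ((i, a), s)` is vertex `a` of the `i`-th lobe at the root followed by
the steps in `s`, latest first, a step `(j, b)` going to vertex `b` of the `j`-th lobe below. -/
abbrev LobeAddr (m t : ℕ) := Option ((Fin m × Fin t) × List (Fin (m - 1) × Fin t))

namespace LobeAddr

variable {m t : ℕ}

def depth : LobeAddr m t → ℕ
  | none => 0
  | some (_, s) => s.length + 1

-- `inl i` is the `i`-th lobe at the root, `inr (w, j)` the `j`-th lobe below `some w`.
abbrev Lobe (m t : ℕ) := Fin m ⊕ ((Fin m × Fin t) × List (Fin (m - 1) × Fin t)) × Fin (m - 1)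

def Lobe.gate : Lobe m t → LobeAddr m t
  | .inl _ => none
  | .inr (w, _) => some w

def child : Lobe m t → Fin t → (Fin m × Fin t) × List (Fin (m - 1) × Fin t)
  | .inl i, a => ((i, a), [])
  | .inr ((c, s), j), a => (c, (j, a) :: s)

lemma exists_child_eq : ∀ w : (Fin m × Fin t) × List (Fin (m - 1) × Fin t), ∃ k a, child k a = w
  | (c, []) => ⟨.inl c.1, c.2, rfl⟩
  | (c, e :: s) => ⟨.inr ((c, s), e.1), e.2, rfl⟩

@[simp] lemma depth_child (k : Lobe m t) (a : Fin t) :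
    depth (some (child k a)) = k.gate.depth + 1 := by
  rcases k with i | ⟨⟨c, s⟩, j⟩ <;> rfl

@[elab_as_elim]
lemma induction {motive : LobeAddr m t → Prop} (root : motive none)
    (child : ∀ k a, motive k.gate → motive (some (child k a))) : ∀ z, motive z
  | none => root
  | some (c, []) => child (.inl c.1) c.2 root
  | some (c, e :: s) => child (.inr ((c, s), e.1)) e.2 (induction root child (some (c, s)))

def Mem (z : LobeAddr m t) (k : Lobe m t) : Prop := z = k.gate ∨ ∃ a, z = some (child k a)

def graph (m t : ℕ) : SimpleGraph (LobeAddr m t) where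
  Adj z z' := z ≠ z' ∧ ∃ k, Mem z k ∧ Mem z' k
  symm := ⟨fun _ _ ⟨h, k, h₁, h₂⟩ => ⟨h.symm, k, h₂, h₁⟩⟩
  loopless := ⟨fun _ h => h.1 rfl⟩

lemma ncard_setOf_depth_eq_succ (n : ℕ) :
    {z : LobeAddr m t | z.depth = n + 1}.ncard = m * (m - 1) ^ n * t ^ (n + 1) := by
  have e : {z : LobeAddr m t | z.depth = n + 1} ≃
      (Fin m × Fin t) × List.Vector (Fin (m - 1) × Fin t) n :=
    { toFun := fun
        | ⟨some (c, s), h⟩ => (c, ⟨s, by simpa [depth] using h⟩)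
        | ⟨none, h⟩ => absurd h (by simp [depth])
      invFun := fun p => ⟨some (p.1, p.2.1), by simp [depth, p.2.2]⟩
      left_inv := fun
        | ⟨some _, _⟩ => rfl
        | ⟨none, h⟩ => absurd h (by simp [depth])
      right_inv := fun _ => rfl }
  rw [← Nat.card_coe_set_eq, Nat.card_congr e, Nat.card_eq_fintype_card]
  simp only [Fintype.card_prod, card_vector, Fintype.card_fin]
  ring

end LobeAddr

namespace SimpleGraph

variable {V : Type*}

/- Numberings of the lobes with gate `v` (`m` of them at `α`, `m - 1` at any other vertex) and of
the vertices of a lobe other than a given one; `addr` reads addresses through them. -/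
structure LobeLabelling (Γ : SimpleGraph V) (L : Set (Set V)) (α : V) (m t : ℕ) where
  rootLobe : Fin m → Set V
  childLobe : V → Fin (m - 1) → Set V
  vertex : Set V → V → Fin t → V
  bijOn_rootLobe : BijOn rootLobe univ (Γ.childLobes L α α)
  bijOn_childLobe : ∀ v ≠ α, BijOn (childLobe v) univ (Γ.childLobes L α v)
  bijOn_vertex : ∀ l ∈ L, ∀ v ∈ l, BijOn (vertex l v) univ (l \ {v})

namespace LobeLabelling

open LobeAddr

variable {Γ : SimpleGraph V} {L : Set (Set V)} {α : V} {m t : ℕ} (E : LobeLabelling Γ L α m t)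

def addr : LobeAddr m t → V
  | none => α
  | some (c, s) =>
    s.foldr (fun e u => E.vertex (E.childLobe u e.1) u e.2) (E.vertex (E.rootLobe c.1) α c.2)

def lobe : Lobe m t → Set V
  | .inl i => E.rootLobe i
  | .inr (w, j) => E.childLobe (E.addr (some w)) j

@[simp] lemma addr_none : E.addr none = α := rfl

lemma addr_child : ∀ (k : Lobe m t) (a : Fin t),
    E.addr (some (child k a)) = E.vertex (E.lobe k) (E.addr k.gate) a
  | .inl _, _ => rfl
  | .inr _, _ => rfl

lemma rootLobe_mem (i : Fin m) : E.rootLobe i ∈ Γ.childLobes L α α :=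
  E.bijOn_rootLobe.mapsTo (mem_univ i)

lemma childLobe_mem {v : V} (hv : v ≠ α) (j : Fin (m - 1)) :
    E.childLobe v j ∈ Γ.childLobes L α v :=
  (E.bijOn_childLobe v hv).mapsTo (mem_univ j)

lemma vertex_mem {l : Set V} {u : V} (hl : l ∈ Γ.childLobes L α u) (a : Fin t) :
    E.vertex l u a ∈ l \ {u} :=
  (E.bijOn_vertex l hl.1 u hl.2.1).mapsTo (mem_univ a)

lemma vertex_ne_root {l : Set V} {u : V} (hl : l ∈ Γ.childLobes L α u) (a : Fin t) :
    E.vertex l u a ≠ α :=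
  hl.2.ne_root (E.vertex_mem hl a).1 (E.vertex_mem hl a).2

lemma addr_some_ne (c : Fin m × Fin t) : ∀ s, E.addr (some (c, s)) ≠ α
  | [] => E.vertex_ne_root (E.rootLobe_mem c.1) c.2
  | e :: s => E.vertex_ne_root (E.childLobe_mem (addr_some_ne c s) e.1) e.2

lemma lobe_mem_childLobes : ∀ k : Lobe m t, E.lobe k ∈ Γ.childLobes L α (E.addr k.gate)
  | .inl i => E.rootLobe_mem i
  | .inr ((c, s), j) => E.childLobe_mem (E.addr_some_ne c s) j

lemma addr_child_mem (k : Lobe m t) (a : Fin t) :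
    E.addr (some (child k a)) ∈ E.lobe k \ {E.addr k.gate} :=
  E.addr_child k a ▸ E.vertex_mem (E.lobe_mem_childLobes k) a

lemma dist_addr (z : LobeAddr m t) : Γ.dist α (E.addr z) = z.depth := by
  induction z using LobeAddr.induction with
  | root => simp [depth]
  | child k a ih =>
    have hk := E.lobe_mem_childLobes k
    have hv := E.vertex_mem hk a
    rw [depth_child, ← ih, E.addr_child]
    exact hk.2.2 _ hv.1 hv.2

lemma lobe_eq_of_gate_eq {k k' : Lobe m t} (hg : k.gate = k'.gate) (h : E.lobe k = E.lobe k') :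
    k = k' := by
  rcases k with i | ⟨⟨c, s⟩, j⟩ <;> rcases k' with i' | ⟨⟨c', s'⟩, j'⟩ <;>
    simp only [Lobe.gate, reduceCtorEq, Option.some.injEq, Prod.mk.injEq] at hg
  · exact congrArg _ (Set.injOn_univ.1 E.bijOn_rootLobe.injOn h)
  · obtain ⟨rfl, rfl⟩ := hg
    have := Set.injOn_univ.1 (E.bijOn_childLobe _ (E.addr_some_ne c s)).injOn h
    rw [this]

lemma addr_injective (hL : Γ.IsLobeDecomposition L) (hconn : Γ.Connected) :
    Function.Injective E.addr := by
  suffices h : ∀ n (z z' : LobeAddr m t), z.depth = n → E.addr z = E.addr z' → z = z' from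
    fun z z' => h _ z z' rfl
  intro n
  induction n with
  | zero =>
    rintro (_ | w) z' hz h
    · rcases z' with _ | ⟨c, s⟩
      · rfl
      · exact absurd h.symm (E.addr_some_ne c s)
    · simp [depth] at hz
  | succ n ih =>
    rintro (_ | w) z' hz h
    · simp [depth] at hz
    obtain ⟨k, a, rfl⟩ := exists_child_eq w
    rcases z' with _ | w'
    · exact absurd h (by obtain ⟨c, s⟩ := child k a; exact E.addr_some_ne c s)
    obtain ⟨k', a', rfl⟩ := exists_child_eq w'
    have hk := E.lobe_mem_childLobes k
    have hk' := E.lobe_mem_childLobes k'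
    have hv := E.addr_child_mem k a
    have hv' := E.addr_child_mem k' a'
    rw [h] at hv
    have hl : E.lobe k = E.lobe k' :=
      hL.eq_of_isGate_ne hconn hk.1 hk'.1 hk.2 hk'.2 hv.1 hv'.1 hv.2 hv'.2
    have hg : k.gate = k'.gate :=
      ih _ _ (by simpa using hz) (hk.2.eq (hl ▸ hk'.2))
    obtain rfl := E.lobe_eq_of_gate_eq hg hl
    rw [E.addr_child, E.addr_child] at h
    rw [Set.injOn_univ.1 (E.bijOn_vertex _ hk.1 _ hk.2.1).injOn h]

lemma lobe_injective (hL : Γ.IsLobeDecomposition L) (hconn : Γ.Connected) :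
    Function.Injective E.lobe := fun k k' h =>
  E.lobe_eq_of_gate_eq (E.addr_injective hL hconn
    ((E.lobe_mem_childLobes k).2.eq (h ▸ (E.lobe_mem_childLobes k').2))) h

lemma exists_lobe_eq {l : Set V} : ∀ {z : LobeAddr m t}, l ∈ Γ.childLobes L α (E.addr z) →
    ∃ k, k.gate = z ∧ E.lobe k = l
  | none, hl => by
    obtain ⟨i, -, rfl⟩ := E.bijOn_rootLobe.surjOn hl
    exact ⟨.inl i, rfl, rfl⟩
  | some (c, s), hl => by
    obtain ⟨j, -, rfl⟩ := (E.bijOn_childLobe _ (E.addr_some_ne c s)).surjOn hl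
    exact ⟨.inr ((c, s), j), rfl, rfl⟩

lemma addr_surjective (hL : Γ.IsLobeDecomposition L) (hconn : Γ.Connected)
    (hgate : ∀ l ∈ L, ∃ g, Γ.IsGate α l g) : Function.Surjective E.addr := by
  suffices h : ∀ n (v : V), Γ.dist α v = n → ∃ z, E.addr z = v from fun v => h _ v rfl
  intro n
  induction n using Nat.strong_induction_on with
  | _ n ih =>
    intro v hv
    by_cases hvα : v = α
    · exact ⟨none, hvα.symm⟩
    obtain ⟨l, hl, hvl, u, hu, huv⟩ := hL.exists_isGate_ne hconn hgate hvα
    obtain ⟨z, rfl⟩ := ih _ (by have := hu.2 v hvl huv.symm; omega) u rfl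
    obtain ⟨k, rfl, rfl⟩ := E.exists_lobe_eq ⟨hl, hu⟩
    obtain ⟨a, -, rfl⟩ := (E.bijOn_vertex _ hl _ hu.1).surjOn ⟨hvl, huv.symm⟩
    exact ⟨some (child k a), E.addr_child k a⟩

lemma addr_mem_lobe_iff (hL : Γ.IsLobeDecomposition L) (hconn : Γ.Connected)
    {z : LobeAddr m t} {k : Lobe m t} : E.addr z ∈ E.lobe k ↔ Mem z k := by
  have hk := E.lobe_mem_childLobes k
  constructor
  · intro h
    by_cases hg : E.addr z = E.addr k.gate
    · exact Or.inl (E.addr_injective hL hconn hg)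
    rcases z with _ | w
    · exact absurd (hk.2.eq_root h).symm hg
    obtain ⟨k', a, rfl⟩ := exists_child_eq w
    have hk' := E.lobe_mem_childLobes k'
    have hv := E.addr_child_mem k' a
    obtain rfl := E.lobe_injective hL hconn
      (hL.eq_of_isGate_ne hconn hk.1 hk'.1 hk.2 hk'.2 h hv.1 hg hv.2)
    exact Or.inr ⟨a, rfl⟩
  · rintro (rfl | ⟨a, rfl⟩)
    · exact hk.2.1
    · exact (E.addr_child_mem k a).1

lemma adj_addr_iff (hL : Γ.IsLobeDecomposition L) (hconn : Γ.Connected)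
    (hgate : ∀ l ∈ L, ∃ g, Γ.IsGate α l g) {z z' : LobeAddr m t} :
    Γ.Adj (E.addr z) (E.addr z') ↔ (LobeAddr.graph m t).Adj z z' := by
  rw [hL.adj_iff, (E.addr_injective hL hconn).ne_iff]
  refine and_congr_right fun _ => ⟨fun ⟨l, hl, hz, hz'⟩ => ?_, fun ⟨k, hz, hz'⟩ => ?_⟩
  · obtain ⟨g, hg⟩ := hgate l hl
    obtain ⟨p, rfl⟩ := E.addr_surjective hL hconn hgate g
    obtain ⟨k, -, rfl⟩ := E.exists_lobe_eq ⟨hl, hg⟩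
    exact ⟨k, (E.addr_mem_lobe_iff hL hconn).1 hz, (E.addr_mem_lobe_iff hL hconn).1 hz'⟩
  · exact ⟨E.lobe k, (E.lobe_mem_childLobes k).1, (E.addr_mem_lobe_iff hL hconn).2 hz,
      (E.addr_mem_lobe_iff hL hconn).2 hz'⟩

noncomputable def iso (hL : Γ.IsLobeDecomposition L) (hconn : Γ.Connected)
    (hgate : ∀ l ∈ L, ∃ g, Γ.IsGate α l g) : LobeAddr.graph m t ≃g Γ where
  toEquiv := Equiv.ofBijective E.addr ⟨E.addr_injective hL hconn, E.addr_surjective hL hconn hgate⟩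
  map_rel_iff' := E.adj_addr_iff hL hconn hgate

@[simp] lemma iso_apply (hL : Γ.IsLobeDecomposition L) (hconn : Γ.Connected)
    (hgate : ∀ l ∈ L, ∃ g, Γ.IsGate α l g) (z : LobeAddr m t) :
    E.iso hL hconn hgate z = E.addr z := rfl

def relabel (σR : Equiv.Perm (Fin m)) (σL : V → Equiv.Perm (Fin (m - 1)))
    (σV : Set V → V → Equiv.Perm (Fin t)) : LobeLabelling Γ L α m t where
  rootLobe := E.rootLobe ∘ σR
  childLobe v := E.childLobe v ∘ σL v
  vertex l v := E.vertex l v ∘ σV l v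
  bijOn_rootLobe := E.bijOn_rootLobe.comp (Set.bijOn_univ.2 σR.bijective)
  bijOn_childLobe v hv := (E.bijOn_childLobe v hv).comp (Set.bijOn_univ.2 (σL v).bijective)
  bijOn_vertex l hl v hv := (E.bijOn_vertex l hl v hv).comp (Set.bijOn_univ.2 (σV l v).bijective)

lemma addr_relabel_one {σL : V → Equiv.Perm (Fin (m - 1))} {σV : Set V → V → Equiv.Perm (Fin t)}
    {z : LobeAddr m t} (h : ∀ v, Γ.dist α v < z.depth → σL v = 1 ∧ ∀ l, σV l v = 1) :
    (E.relabel 1 σL σV).addr z = E.addr z := by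
  induction z using LobeAddr.induction with
  | root => rfl
  | child k a ih =>
    rw [depth_child] at h
    have hg := ih fun v hv => h v (by omega)
    obtain ⟨hσL, hσV⟩ := h (E.addr k.gate) (by rw [E.dist_addr]; omega)
    have hlobe : (E.relabel 1 σL σV).lobe k = E.lobe k := by
      rcases k with i | ⟨w, j⟩
      · rfl
      · change E.childLobe _ (σL _ j) = E.childLobe _ j
        rw [show (E.relabel 1 σL σV).addr (some w) = E.addr (some w) from hg,
          show σL (E.addr (some w)) = 1 from hσL, Equiv.Perm.one_apply]
    rw [addr_child, addr_child, hlobe, hg]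
    change E.vertex _ _ (σV _ _ a) = _
    rw [hσV, Equiv.Perm.one_apply]

lemma exists_addr_child_eq {k k' : Lobe m t} (hk : k.gate = k'.gate) (a b : Fin t) :
    ∃ E' : LobeLabelling Γ L α m t, E'.addr (some (child k a)) = E.addr (some (child k' b)) := by
  classical
  rcases k with i | ⟨w, j⟩ <;> rcases k' with i' | ⟨w', j'⟩ <;>
    simp only [Lobe.gate, reduceCtorEq, Option.some.injEq] at hk
  · refine ⟨E.relabel (Equiv.swap i i') 1 fun _ v => if v = α then Equiv.swap a b else 1, ?_⟩
    simp [addr_child, lobe, relabel, Lobe.gate]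
  · subst hk
    set u := E.addr (some w)
    let σL : V → Equiv.Perm (Fin (m - 1)) := fun v => if v = u then Equiv.swap j j' else 1
    let σV : Set V → V → Equiv.Perm (Fin t) := fun _ v => if v = u then Equiv.swap a b else 1
    -- only the numberings at `u` change, and they are not read on the way from `α` to `u`
    have hu : (E.relabel 1 σL σV).addr (some w) = u := E.addr_relabel_one fun v hv => by
      have : v ≠ u := fun h => by rw [h, E.dist_addr] at hv; omega
      simp [σL, σV, this]
    refine ⟨E.relabel 1 σL σV, ?_⟩
    rw [addr_child, addr_child]
    simp only [lobe, Lobe.gate, hu]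
    simp [relabel, σL, σV, u]

lemma exists_addr_eq (E : LobeLabelling Γ L α m t) (hL : Γ.IsLobeDecomposition L)
    (hconn : Γ.Connected) (hgate : ∀ l ∈ L, ∃ g, Γ.IsGate α l g) (z : LobeAddr m t) :
    ∀ {β : V}, Γ.dist α β = z.depth → ∃ E' : LobeLabelling Γ L α m t, E'.addr z = β := by
  induction z using LobeAddr.induction with
  | root =>
    intro β hβ
    exact ⟨E, hconn.dist_eq_zero_iff.1 hβ⟩
  | child k a ih =>
    intro β hβ
    rw [depth_child] at hβ
    have hβα : β ≠ α := fun h => by rw [h] at hβ; simp at hβ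
    obtain ⟨l, hl, hβl, u, hu, huβ⟩ := hL.exists_isGate_ne hconn hgate hβα
    obtain ⟨E₁, hE₁⟩ := ih (β := u) (by have := hu.2 β hβl huβ.symm; omega)
    obtain ⟨k', hk', rfl⟩ :=
      E₁.exists_lobe_eq (z := k.gate) (l := l) (by rw [hE₁]; exact ⟨hl, hu⟩)
    obtain ⟨b, -, rfl⟩ := (E₁.bijOn_vertex _ hl _ hu.1).surjOn ⟨hβl, huβ.symm⟩
    obtain ⟨E', hE'⟩ := E₁.exists_addr_child_eq hk'.symm a b
    exact ⟨E', by rw [hE', addr_child, hk', hE₁]⟩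

lemma nonempty (hL : Γ.IsLobeDecomposition L) (hconn : Γ.Connected)
    (hgate : ∀ l ∈ L, ∃ g, Γ.IsGate α l g) (hm : m ≠ 0) (hsize : ∀ l ∈ L, l.ncard = t + 1)
    (hvertex : ∀ v : V, {l ∈ L | v ∈ l}.ncard = m) : Nonempty (LobeLabelling Γ L α m t) := by
  classical
  have hfin : ∀ v : V, {l ∈ L | v ∈ l}.Finite := fun v =>
    finite_of_ncard_ne_zero (by rw [hvertex]; exact hm)
  obtain ⟨fR, hfR⟩ := Set.exists_bijOn_fin (n := m) (childLobes_root hgate ▸ hfin α)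
    (by rw [childLobes_root hgate, hvertex])
  have hfL : ∀ v : V, ∃ f : Fin (m - 1) → Set V, v ≠ α → BijOn f univ (Γ.childLobes L α v) := by
    intro v
    by_cases hv : v = α
    · exact ⟨fun _ => ∅, fun h => absurd hv h⟩
    obtain ⟨l₀, hl₀, hvl₀, g₀, hg₀, hg₀v⟩ := hL.exists_isGate_ne hconn hgate hv
    rw [hL.childLobes_eq_sdiff hconn hgate hl₀ hg₀ hvl₀ hg₀v.symm]
    obtain ⟨f, hf⟩ := Set.exists_bijOn_fin (hfin v).sdiff
      (by rw [ncard_sdiff_singleton_of_mem (show l₀ ∈ {l ∈ L | v ∈ l} from ⟨hl₀, hvl₀⟩), hvertex])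
    exact ⟨f, fun _ => hf⟩
  have hfV : ∀ (l : Set V) (v : V), ∃ f : Fin t → V, l ∈ L → v ∈ l → BijOn f univ (l \ {v}) := by
    intro l v
    by_cases h : l ∈ L ∧ v ∈ l
    · have hl : l.Finite := finite_of_ncard_ne_zero (by rw [hsize l h.1]; omega)
      obtain ⟨f, hf⟩ := Set.exists_bijOn_fin hl.sdiff
        (by rw [ncard_sdiff_singleton_of_mem h.2, hsize l h.1, Nat.add_sub_cancel])
      exact ⟨f, fun _ _ => hf⟩
    · exact ⟨fun _ => v, fun hl hv => absurd ⟨hl, hv⟩ h⟩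
  choose fL hfL using hfL
  choose fV hfV using hfV
  exact ⟨⟨fR, fL, fV, hfR, hfL, fun l hl v hv => hfV l v hl hv⟩⟩

lemma ncard_sphere (E : LobeLabelling Γ L α m t) (hL : Γ.IsLobeDecomposition L)
    (hconn : Γ.Connected) (hgate : ∀ l ∈ L, ∃ g, Γ.IsGate α l g) (n : ℕ) :
    {β | Γ.dist α β = n + 1}.ncard = m * (m - 1) ^ n * t ^ (n + 1) := by
  have hsphere : {β | Γ.dist α β = n + 1} = E.addr '' {z | z.depth = n + 1} := by
    ext β
    obtain ⟨z, rfl⟩ := E.addr_surjective hL hconn hgate β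
    simp [(E.addr_injective hL hconn).mem_set_image, E.dist_addr]
  rw [hsphere, ncard_image_of_injective _ (E.addr_injective hL hconn),
    LobeAddr.ncard_setOf_depth_eq_succ]

lemma exists_iso (E : LobeLabelling Γ L α m t) (hL : Γ.IsLobeDecomposition L) (hconn : Γ.Connected)
    (hgate : ∀ l ∈ L, ∃ g, Γ.IsGate α l g) {β γ : V} (h : Γ.dist α β = Γ.dist α γ) :
    ∃ φ : Γ ≃g Γ, φ α = α ∧ φ β = γ := by
  let Φ := E.iso hL hconn hgate
  have hΦβ : E.addr (Φ.symm β) = β := Φ.apply_symm_apply β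
  obtain ⟨E', hE'⟩ := E.exists_addr_eq hL hconn hgate (Φ.symm β) (β := γ)
    (by rw [← E.dist_addr, hΦβ, h])
  have hΦα : Φ.symm α = none := Φ.symm_apply_eq.2 rfl
  exact ⟨Φ.symm.trans (E'.iso hL hconn hgate), by simp [hΦα], by simpa using hE'⟩

end LobeLabelling

end SimpleGraph

open SimpleGraph

theorem stmt15_general {V : Type*} (Γ : SimpleGraph V) (hconn : Γ.Connected)
    (m t : ℕ) (hm : 2 ≤ m)
    -- L is the set of lobes of Γ; each lobe is a complete graph on t+1 vertices
    (L : Set (Set V))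
    (hlobesize : ∀ l ∈ L, l.ncard = t + 1)
    (hlobeclique : ∀ l ∈ L, ∀ x ∈ l, ∀ y ∈ l, x ≠ y → Γ.Adj x y)
    -- each edge lies in exactly one lobe
    (hedge : ∀ x y : V, Γ.Adj x y → ∃! l, l ∈ L ∧ x ∈ l ∧ y ∈ l)
    -- each vertex lies in exactly m lobes
    (hvertex : ∀ v : V, {l ∈ L | v ∈ l}.ncard = m)
    -- connectivity one: every cycle is contained in a single lobe
    (hcycle : ∀ (v : V) (c : Γ.Walk v v), c.IsCycle →
      ∃ l ∈ L, ∀ x ∈ c.support, x ∈ l)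
    (α : V) :
    -- each sphere is a single orbit of the stabiliser of α in Aut(Γ) ...
    (∀ r : ℕ, 1 ≤ r → ∀ β γ : V, Γ.dist α β = r → Γ.dist α γ = r →
        ∃ φ : Γ ≃g Γ, φ α = α ∧ φ β = γ) ∧
    -- ... of size m·(m−1)^{r−1}·t^r ...
    (∀ r : ℕ, 1 ≤ r →
        {β : V | Γ.dist α β = r}.ncard = m * (m - 1) ^ (r - 1) * t ^ r) ∧
    -- ... and hence the non-decreasing sequence of subdegrees m_r (the sphere sizes)
    -- satisfies lim m_r^{1/r} = (m−1)·t = ((m−1)/m)·m₁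
    Tendsto (fun r : ℕ => (({β : V | Γ.dist α β = r}.ncard : ℝ)) ^ ((r : ℝ)⁻¹))
      atTop (nhds (((m : ℝ) - 1) * t)) ∧
    (((m : ℝ) - 1) * t = (((m : ℝ) - 1) / m) * ({β : V | Γ.dist α β = 1}.ncard : ℝ)) := by
  have hL : Γ.IsLobeDecomposition L := ⟨hlobeclique, hedge, hcycle⟩
  have hgate : ∀ l ∈ L, ∃ g, Γ.IsGate α l g := fun l hl =>
    hL.exists_isGate hconn hl (finite_of_ncard_ne_zero (by simp [hlobesize l hl]))
      (nonempty_of_ncard_ne_zero (by simp [hlobesize l hl]))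
  obtain ⟨E⟩ := LobeLabelling.nonempty hL hconn hgate (by omega) hlobesize hvertex
  have hcard (r : ℕ) (hr : 1 ≤ r) :
      {β | Γ.dist α β = r}.ncard = m * (m - 1) ^ (r - 1) * t ^ r := by
    obtain ⟨n, rfl⟩ := Nat.exists_eq_add_of_le' hr
    rw [E.ncard_sphere hL hconn hgate, Nat.add_sub_cancel]
  have hm₁ : (0 : ℝ) < m - 1 := by
    have : (2 : ℝ) ≤ m := by exact_mod_cast hm
    linarith
  refine ⟨fun r _ β γ hβ hγ => E.exists_iso hL hconn hgate (hβ.trans hγ.symm), hcard, ?_, ?_⟩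
  · refine tendsto_rpow_inv_of_eventually_eq_mul_pow (C := m / (m - 1))
      (div_pos (by positivity) hm₁) (by positivity) ?_
    filter_upwards [eventually_ge_atTop 1] with r hr
    obtain ⟨n, rfl⟩ := Nat.exists_eq_add_of_le' hr
    rw [hcard _ hr, Nat.add_sub_cancel, mul_pow]
    push_cast [Nat.cast_sub (by omega : 1 ≤ m)]
    rw [div_mul_eq_mul_div, eq_div_iff hm₁.ne']
    ring
  · rw [hcard 1 le_rfl]
    push_cast [Nat.cast_sub (by omega : 1 ≤ m)]
    field_simp

theorem stmt15 {V : Type*} (Γ : SimpleGraph V) (hconn : Γ.Connected)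
    (m t : ℕ) (hm : 2 ≤ m) (ht : 2 ≤ t)
    -- L is the set of lobes of Γ; each lobe is a complete graph on t+1 vertices
    (L : Set (Set V))
    (hlobesize : ∀ l ∈ L, l.ncard = t + 1)
    (hlobeclique : ∀ l ∈ L, ∀ x ∈ l, ∀ y ∈ l, x ≠ y → Γ.Adj x y)
    -- each edge lies in exactly one lobe
    (hedge : ∀ x y : V, Γ.Adj x y → ∃! l, l ∈ L ∧ x ∈ l ∧ y ∈ l)
    -- each vertex lies in exactly m lobes
    (hvertex : ∀ v : V, {l ∈ L | v ∈ l}.ncard = m)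
    -- connectivity one: every cycle is contained in a single lobe
    (hcycle : ∀ (v : V) (c : Γ.Walk v v), c.IsCycle →
      ∃ l ∈ L, ∀ x ∈ c.support, x ∈ l)
    (α : V) :
    -- each sphere is a single orbit of the stabiliser of α in Aut(Γ) ...
    (∀ r : ℕ, 1 ≤ r → ∀ β γ : V, Γ.dist α β = r → Γ.dist α γ = r →
        ∃ φ : Γ ≃g Γ, φ α = α ∧ φ β = γ) ∧
    -- ... of size m·(m−1)^{r−1}·t^r ...
    (∀ r : ℕ, 1 ≤ r →
        {β : V | Γ.dist α β = r}.ncard = m * (m - 1) ^ (r - 1) * t ^ r) ∧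
    -- ... and hence the non-decreasing sequence of subdegrees m_r (the sphere sizes)
    -- satisfies lim m_r^{1/r} = (m−1)·t = ((m−1)/m)·m₁
    Tendsto (fun r : ℕ => (({β : V | Γ.dist α β = r}.ncard : ℝ)) ^ ((r : ℝ)⁻¹))
      atTop (nhds (((m : ℝ) - 1) * t)) ∧
    (((m : ℝ) - 1) * t = (((m : ℝ) - 1) / m) * ({β : V | Γ.dist α β = 1}.ncard : ℝ)) :=
  stmt15_general Γ hconn m t hm L hlobesize hlobeclique hedge hvertex hcycle α
end

section
/- Let s₁ ≥ 2 and R₀ be given, and suppose (m_k) is a non-decreasing sequence of positive reals and (N_r) an increasing sequence of positive integers with N_r ≥ R₀ + 2(r − R₀) for all large r, such that m_{N_r} ≤ s₁·(s₁−1)^{r−1} for all r. Then limsup_{r→∞} m_{N_r}^{1/N_r} ≤ √(s₁ − 1); in particular liminf_{k→∞} m_k^{1/k} ≤ √(s₁ − 1). -/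
open Filter

theorem stmt17 (s₁ : ℕ) (hs₁ : 2 ≤ s₁) (R₀ : ℕ)
    (m : ℕ → ℝ) (hmpos : ∀ k, 0 < m k) (hmmono : Monotone m)
    (N : ℕ → ℕ) (hNmono : StrictMono N)
    (hN : ∀ᶠ r : ℕ in atTop, R₀ + 2 * (r - R₀) ≤ N r)
    (hbound : ∀ r : ℕ, 1 ≤ r →
      m (N r) ≤ (s₁ : ℝ) * ((s₁ : ℝ) - 1) ^ (r - 1)) :
    atTop.limsup (fun r : ℕ => (m (N r)) ^ ((N r : ℝ)⁻¹)) ≤ Real.sqrt ((s₁ : ℝ) - 1) ∧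
      atTop.liminf (fun k : ℕ => (m k) ^ ((k : ℝ)⁻¹)) ≤ Real.sqrt ((s₁ : ℝ) - 1) := by
  have ha1 : (1:ℝ) ≤ (s₁ : ℝ) - 1 := by
    have : (2:ℝ) ≤ (s₁:ℝ) := by exact_mod_cast hs₁
    linarith
  set a : ℝ := (s₁ : ℝ) - 1 with ha_def
  have ha0 : 0 < a := lt_of_lt_of_le one_pos ha1
  have hs0 : (0:ℝ) < (s₁:ℝ) := by
    have : (2:ℝ) ≤ (s₁:ℝ) := by exact_mod_cast hs₁
    linarith
  set L : ℝ := Real.sqrt a with hL_def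
  have hL1 : 1 ≤ L := by
    rw [hL_def, show (1:ℝ) = Real.sqrt 1 by simp]
    exact Real.sqrt_le_sqrt ha1
  set e : ℕ → ℕ := fun r => R₀ + 2 * (r - R₀) with he_def
  have he_top : Tendsto e atTop atTop := by
    apply tendsto_atTop_mono' atTop (show ∀ᶠ r in atTop, r ≤ e r from ?_) tendsto_id
    filter_upwards [eventually_ge_atTop R₀] with r hr
    simp only [he_def]
    omega
  set c : ℕ → ℝ := fun r => ((s₁:ℝ) * a ^ (r - 1)) ^ ((e r : ℝ)⁻¹) with hc_def
  -- limit of the quotient of logs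
  have hq : Tendsto (fun r : ℕ => (Real.log s₁ + ((r:ℝ) - 1) * Real.log a) / (2 * (r:ℝ) - R₀))
      atTop (nhds (Real.log a / 2)) := by
    have hinv : Tendsto (fun r : ℕ => ((r:ℝ))⁻¹) atTop (nhds 0) :=
      tendsto_inv_atTop_nhds_zero_nat
    have h1 : Tendsto (fun r : ℕ =>
        (Real.log s₁ * ((r:ℝ))⁻¹ + (1 - ((r:ℝ))⁻¹) * Real.log a) / (2 - (R₀:ℝ) * ((r:ℝ))⁻¹))
        atTop (nhds ((Real.log s₁ * 0 + (1 - 0) * Real.log a) / (2 - (R₀:ℝ) * 0))) := by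
      apply Tendsto.div
      · exact ((tendsto_const_nhds.mul hinv).add
          ((tendsto_const_nhds.sub hinv).mul tendsto_const_nhds))
      · exact tendsto_const_nhds.sub (tendsto_const_nhds.mul hinv)
      · norm_num
    have h2 : (Real.log s₁ * 0 + (1 - 0) * Real.log a) / (2 - (R₀:ℝ) * 0)
        = Real.log a / 2 := by norm_num
    rw [h2] at h1
    apply h1.congr'
    filter_upwards [eventually_ge_atTop (R₀ + 1)] with r hr
    have hr1 : (1:ℝ) ≤ (r:ℝ) := by exact_mod_cast Nat.one_le_iff_ne_zero.mpr (by omega)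
    have hr0 : (r:ℝ) ≠ 0 := by linarith
    have hRr : (R₀:ℝ) + 1 ≤ (r:ℝ) := by exact_mod_cast hr
    have hB : 2 * (r:ℝ) - R₀ ≠ 0 := by linarith
    have hB' : 2 - (R₀:ℝ) * ((r:ℝ))⁻¹ ≠ 0 := by
      have h3 : (R₀:ℝ) * ((r:ℝ))⁻¹ < 2 := by
        rw [mul_inv_lt_iff₀ (by linarith : (0:ℝ) < (r:ℝ))]
        linarith
      linarith
    field_simp
  have hc_tendsto : Tendsto c atTop (nhds L) := by
    have hexp : Tendsto (fun r : ℕ =>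
        Real.exp ((Real.log s₁ + ((r:ℝ) - 1) * Real.log a) / (2 * (r:ℝ) - R₀)))
        atTop (nhds (Real.exp (Real.log a / 2))) := (Real.continuous_exp.tendsto _).comp hq
    have hLe : Real.exp (Real.log a / 2) = L := by
      rw [hL_def, Real.sqrt_eq_rpow, Real.rpow_def_of_pos ha0]
      ring_nf
    rw [← hLe]
    apply hexp.congr'
    filter_upwards [eventually_ge_atTop (R₀ + 1)] with r hr
    have hrR : R₀ ≤ r := by omega
    have hr1 : 1 ≤ r := by omega
    have her : (e r : ℝ) = 2 * (r:ℝ) - R₀ := by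
      have : e r = 2 * r - R₀ := by simp only [he_def]; omega
      rw [this]
      push_cast [Nat.cast_sub (by omega : R₀ ≤ 2 * r)]
      ring
    have hpos : (0:ℝ) < (s₁:ℝ) * a ^ (r - 1) := by positivity
    simp only [hc_def]
    rw [Real.rpow_def_of_pos hpos, Real.log_mul (ne_of_gt hs0) (by positivity),
      Real.log_pow, her]
    congr 1
    rw [Nat.cast_sub hr1]
    push_cast
    ring
  -- key eventual bound
  have hNk : ∀ r, r ≤ N r := fun r => hNmono.le_apply
  have key : ∀ ε : ℝ, 0 < ε →
      ∀ᶠ r in atTop, m (N r) ^ ((N r : ℝ)⁻¹) ≤ L + ε := by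
    intro ε hε
    have hb : Tendsto (fun r => max 1 (c r)) atTop (nhds (max 1 L)) :=
      tendsto_const_nhds.max hc_tendsto
    rw [max_eq_right hL1] at hb
    have hev : ∀ᶠ r in atTop, max 1 (c r) < L + ε :=
      hb.eventually_lt_const (by linarith)
    filter_upwards [hev, hN, eventually_ge_atTop (R₀ + 1)] with r hmax hNr hr
    have hr1 : 1 ≤ r := by omega
    have her1 : 1 ≤ e r := by simp only [he_def]; omega
    have hN1 : 1 ≤ N r := le_trans hr1 (hNk r)
    have hstep : m (N r) ^ ((N r : ℝ)⁻¹) ≤ max 1 (c r) := by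
      rcases le_or_gt (m (N r)) 1 with hm | hm
      · exact le_trans (Real.rpow_le_one (hmpos _).le hm (by positivity)) (le_max_left _ _)
      · refine le_trans ?_ (le_max_right _ _)
        have h1 : m (N r) ^ ((N r : ℝ)⁻¹) ≤ m (N r) ^ ((e r : ℝ)⁻¹) := by
          apply Real.rpow_le_rpow_of_exponent_le hm.le
          apply inv_anti₀
          · exact_mod_cast her1
          · exact_mod_cast hNr
        refine le_trans h1 ?_
        exact Real.rpow_le_rpow (hmpos _).le (hbound r hr1) (by positivity)
    exact le_trans hstep hmax.le
  have hnonneg : ∀ k, (0:ℝ) ≤ m k ^ ((k:ℝ)⁻¹) := fun k => Real.rpow_nonneg (hmpos k).le _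
  constructor
  · apply le_of_forall_pos_le_add
    intro ε hε
    have hb1 : Filter.IsBoundedUnder (· ≥ ·) atTop (fun r : ℕ => m (N r) ^ ((N r : ℝ)⁻¹)) :=
      Filter.isBoundedUnder_of ⟨0, fun r => hnonneg (N r)⟩
    exact limsup_le_of_le hb1.isCoboundedUnder_le (key ε hε)
  · apply le_of_forall_pos_le_add
    intro ε hε
    have hb2 : Filter.IsBoundedUnder (· ≥ ·) atTop (fun k : ℕ => m k ^ ((k : ℝ)⁻¹)) :=
      Filter.isBoundedUnder_of ⟨0, fun k => hnonneg k⟩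
    exact liminf_le_of_frequently_le
      ((hNmono.tendsto_atTop).frequently (key ε hε).frequently) hb2
end
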